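/- Let N ≥ 2 be an integer and s ∈ (0,1). There exists a constant c > 0, depending only on N and s, such that for every open set Ω ⊆ ℝ^N with nonempty complement and all x₁, x₂ ∈ Ω, |φ_Ω(x₁) − φ_Ω(x₂)| ≤ c·(ρ(x₁)^{−1−2s} + ρ(x₂)^{−1−2s})·|x₁ − x₂|, where ρ(x) = dist(x, ∂Ω). In particular, φ_Ω is locally Lipschitz continuous on Ω. -/

import Mathlib

open MeasureTheory Metric Set Filter

/-- `φ_Ω(x) = ∫_{ℝ^N \ Ω} |x - y|^{-N-2s} dy`. -/
noncomputable def phiReg (N : ℕ) (s : ℝ) (Ω : Set (EuclideanSpace ℝ (Fin N)))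
    (x : EuclideanSpace ℝ (Fin N)) : ℝ :=
  ∫ y in Ωᶜ, ‖x - y‖ ^ (-((N : ℝ) + 2 * s))

/-!
Write `d = dim E`, `α = 2s` and `ρ(x) = dist(x, F)` with `F = Ωᶜ` (for open `Ω` this is also the
distance to `∂Ω`). Polar coordinates give the tail integral
`∫_{|x - y| ≥ ρ} |x - y|^{-d-α} dy = |S^{d-1}| ρ^{-α} / α`, so `φ(x) ≲ ρ(x)^{-α}`.
If `ρ(x₁), ρ(x₂) ≤ 2|x₁ - x₂|`, bound `|φ(x₁) - φ(x₂)|` by `φ(x₁) + φ(x₂)` and use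
`ρ^{-α} ≤ 2|x₁ - x₂| ρ^{-1-α}`. Otherwise, say `ρ(x₁) > 2|x₁ - x₂|`; then `|x₂ - y| ≥ |x₁ - y|/2`
on `F`, and the mean value theorem bounds the difference of the integrands by
`|x₁ - x₂| |x₁ - y|^{-d-α-1}` up to a constant, whose integral is a tail integral with `α + 1`.
-/

open Module

lemma eqOn_pow_pred_smul_indicator_rpow {n : ℕ} (hn : n ≠ 0) (α ρ : ℝ) :
    EqOn (fun t : ℝ => t ^ (n - 1) • (Ici ρ).indicator (fun r : ℝ => r ^ (-(n + α))) t)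
      ((Ici ρ).indicator fun r => r ^ (-α - 1)) (Ioi 0) := by
  intro t (ht : 0 < t)
  by_cases htρ : t ∈ Ici ρ
  · simp only [indicator_of_mem htρ, smul_eq_mul]
    rw [← Real.rpow_natCast, ← Real.rpow_add ht, Nat.cast_pred (Nat.pos_of_ne_zero hn)]
    ring_nf
  · simp [indicator_of_notMem htρ]

lemma abs_rpow_neg_sub_rpow_neg_le {β m a b : ℝ} (hβ : 0 < β) (hm : 0 < m) (ha : m ≤ a)
    (hb : m ≤ b) : |a ^ (-β) - b ^ (-β)| ≤ β * m ^ (-β - 1) * |a - b| := by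
  have hderiv : ∀ t ∈ Ici m,
      HasDerivWithinAt (fun u : ℝ => u ^ (-β)) (-β * t ^ (-β - 1)) (Ici m) t := fun t ht =>
    (Real.hasDerivAt_rpow_const (Or.inl (hm.trans_le ht).ne')).hasDerivWithinAt
  have hbound : ∀ t ∈ Ici m, ‖-β * t ^ (-β - 1)‖ ≤ β * m ^ (-β - 1) := fun t ht => by
    rw [norm_mul, norm_neg, Real.norm_of_nonneg hβ.le,
      Real.norm_of_nonneg (Real.rpow_nonneg (hm.trans_le ht).le _)]
    exact mul_le_mul_of_nonneg_left (Real.rpow_le_rpow_of_nonpos hm ht (by linarith)) hβ.le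
  simpa [Real.norm_eq_abs] using
    (convex_Ici m).norm_image_sub_le_of_norm_hasDerivWithin_le hderiv hbound hb ha

lemma rpow_neg_le_rpow_neg_sub_one_mul {α ρ r : ℝ} (hρ : 0 < ρ) (h : ρ ≤ r) :
    ρ ^ (-α) ≤ ρ ^ (-1 - α) * r := by
  calc ρ ^ (-α) = ρ ^ (-1 - α) * ρ := by
        rw [← Real.rpow_add_one hρ.ne']; ring_nf
    _ ≤ ρ ^ (-1 - α) * r := by gcongr

section NormedGroup

variable {E : Type*} [SeminormedAddCommGroup E]

lemma indicator_compl_ball_comp_norm_sub (f : ℝ → ℝ) (x : E) (ρ : ℝ) :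
    (ball x ρ)ᶜ.indicator (fun y => f ‖x - y‖) = fun y => (Ici ρ).indicator f ‖x - y‖ := by
  ext y
  simp [indicator, dist_eq_norm, norm_sub_rev]

lemma abs_rpow_neg_norm_sub_sub_le {β : ℝ} (hβ : 0 < β) {x₁ x₂ y : E}
    (h : 2 * ‖x₁ - x₂‖ < ‖x₁ - y‖) :
    |‖x₁ - y‖ ^ (-β) - ‖x₂ - y‖ ^ (-β)| ≤ β * 2 ^ (β + 1) * ‖x₁ - x₂‖ * ‖x₁ - y‖ ^ (-β - 1) := by
  have hδ : |‖x₁ - y‖ - ‖x₂ - y‖| ≤ ‖x₁ - x₂‖ := by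
    simpa using abs_norm_sub_norm_le (x₁ - y) (x₂ - y)
  have ha : 0 < ‖x₁ - y‖ := lt_of_le_of_lt (by positivity) h
  have hb : ‖x₁ - y‖ / 2 ≤ ‖x₂ - y‖ := by linarith [le_abs_self (‖x₁ - y‖ - ‖x₂ - y‖)]
  calc _ ≤ β * (‖x₁ - y‖ / 2) ^ (-β - 1) * |‖x₁ - y‖ - ‖x₂ - y‖| :=
        abs_rpow_neg_sub_rpow_neg_le hβ (half_pos ha) (half_le_self ha.le) hb
    _ ≤ β * (‖x₁ - y‖ / 2) ^ (-β - 1) * ‖x₁ - x₂‖ := by gcongr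
    _ = _ := by
        rw [Real.div_rpow ha.le zero_le_two, show -β - 1 = -(β + 1) by ring,
          Real.rpow_neg zero_le_two, div_inv_eq_mul]
        ring

lemma subset_compl_ball_infDist (x : E) (F : Set E) : F ⊆ (ball x (infDist x F))ᶜ :=
  disjoint_ball_infDist.symm.subset_compl_right

end NormedGroup

section PowerKernel

variable {E : Type*} [NormedAddCommGroup E] [NormedSpace ℝ E] [MeasurableSpace E]
  (μ : Measure E) {α ρ : ℝ} {F : Set E} {x x₁ x₂ : E}

noncomputable def powerKernelIntegral (α : ℝ) (F : Set E) (x : E) : ℝ :=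
  ∫ y in F, ‖x - y‖ ^ (-(finrank ℝ E + α)) ∂μ

lemma powerKernelIntegral_nonneg : 0 ≤ powerKernelIntegral μ α F x :=
  integral_nonneg fun _ => Real.rpow_nonneg (norm_nonneg _) _

variable [FiniteDimensional ℝ E] [BorelSpace E] [μ.IsAddHaarMeasure] [Nontrivial E]

lemma integrableOn_compl_ball_rpow_neg_norm_sub (hα : 0 < α) (x : E) (hρ : 0 < ρ) :
    IntegrableOn (fun y => ‖x - y‖ ^ (-(finrank ℝ E + α))) (ball x ρ)ᶜ μ := by
  rw [← integrable_indicator_iff measurableSet_ball.compl,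
    indicator_compl_ball_comp_norm_sub (fun r => r ^ (-(finrank ℝ E + α)))]
  refine Integrable.comp_sub_left (f := fun y => (Ici ρ).indicator _ ‖y‖) ?_ x
  rw [integrable_fun_norm_addHaar μ]
  exact (((integrableOn_Ici_iff_integrableOn_Ioi (by finiteness)).mpr
      (integrableOn_Ioi_rpow_of_lt (a := -α - 1) (by linarith) hρ)).integrable_indicator
      measurableSet_Ici).integrableOn.congr_fun
    (eqOn_pow_pred_smul_indicator_rpow finrank_pos.ne' α ρ).symm measurableSet_Ioi

lemma integral_compl_ball_rpow_neg_norm_sub (hα : 0 < α) (x : E) (hρ : 0 < ρ) :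
    ∫ y in (ball x ρ)ᶜ, ‖x - y‖ ^ (-(finrank ℝ E + α)) ∂μ =
      μ.toSphere.real univ * (ρ ^ (-α) / α) := by
  have hradial : ∫ t in Ioi (0 : ℝ), t ^ (finrank ℝ E - 1) •
      (Ici ρ).indicator (fun r : ℝ => r ^ (-(finrank ℝ E + α))) t = ρ ^ (-α) / α := by
    rw [setIntegral_congr_fun measurableSet_Ioi
        (eqOn_pow_pred_smul_indicator_rpow finrank_pos.ne' α ρ),
      setIntegral_indicator measurableSet_Ici,
      inter_eq_self_of_subset_right (Ici_subset_Ioi.mpr hρ), integral_Ici_eq_integral_Ioi,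
      integral_Ioi_rpow_of_lt (by linarith) hρ, show -α - 1 + 1 = -α by ring, neg_div_neg_eq]
  rw [← integral_indicator measurableSet_ball.compl,
    indicator_compl_ball_comp_norm_sub (fun r => r ^ (-(finrank ℝ E + α))),
    integral_sub_left_eq_self (fun y => (Ici ρ).indicator _ ‖y‖) μ x,
    integral_fun_norm_addHaar μ, hradial, Measure.toSphere_real_apply_univ, nsmul_eq_mul,
    smul_eq_mul, mul_assoc]

lemma integrableOn_rpow_neg_norm_sub_of_infDist_pos (hα : 0 < α) (hx : 0 < infDist x F) :
    IntegrableOn (fun y => ‖x - y‖ ^ (-(finrank ℝ E + α))) F μ :=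
  (integrableOn_compl_ball_rpow_neg_norm_sub μ hα x hx).mono_set (subset_compl_ball_infDist x F)

lemma powerKernelIntegral_le (hα : 0 < α) (hx : 0 < infDist x F) :
    powerKernelIntegral μ α F x ≤ μ.toSphere.real univ * (infDist x F ^ (-α) / α) := by
  rw [← integral_compl_ball_rpow_neg_norm_sub μ hα x hx]
  exact setIntegral_mono_set (integrableOn_compl_ball_rpow_neg_norm_sub μ hα x hx)
    (ae_of_all _ fun _ => Real.rpow_nonneg (norm_nonneg _) _)
    (subset_compl_ball_infDist x F).eventuallyLE

lemma abs_powerKernelIntegral_sub_le_of_le_two_mul (hα : 0 < α) (hx₁ : 0 < infDist x₁ F)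
    (hx₂ : 0 < infDist x₂ F) (h₁ : infDist x₁ F ≤ 2 * ‖x₁ - x₂‖)
    (h₂ : infDist x₂ F ≤ 2 * ‖x₁ - x₂‖) :
    |powerKernelIntegral μ α F x₁ - powerKernelIntegral μ α F x₂| ≤
      2 * μ.toSphere.real univ / α * (infDist x₁ F ^ (-1 - α) + infDist x₂ F ^ (-1 - α)) *
        ‖x₁ - x₂‖ := by
  have hS : 0 ≤ μ.toSphere.real univ := measureReal_nonneg
  have hI₁ := powerKernelIntegral_nonneg μ (α := α) (F := F) (x := x₁)
  have hI₂ := powerKernelIntegral_nonneg μ (α := α) (F := F) (x := x₂)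
  calc |powerKernelIntegral μ α F x₁ - powerKernelIntegral μ α F x₂|
      ≤ powerKernelIntegral μ α F x₁ + powerKernelIntegral μ α F x₂ :=
        abs_sub_le_iff.mpr ⟨by linarith, by linarith⟩
    _ ≤ μ.toSphere.real univ * (infDist x₁ F ^ (-α) / α) +
          μ.toSphere.real univ * (infDist x₂ F ^ (-α) / α) :=
        add_le_add (powerKernelIntegral_le μ hα hx₁) (powerKernelIntegral_le μ hα hx₂)
    _ ≤ μ.toSphere.real univ * (infDist x₁ F ^ (-1 - α) * (2 * ‖x₁ - x₂‖) / α) +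
          μ.toSphere.real univ * (infDist x₂ F ^ (-1 - α) * (2 * ‖x₁ - x₂‖) / α) := by
        gcongr
        · exact rpow_neg_le_rpow_neg_sub_one_mul hx₁ h₁
        · exact rpow_neg_le_rpow_neg_sub_one_mul hx₂ h₂
    _ = _ := by ring

lemma abs_powerKernelIntegral_sub_le_of_two_mul_lt (hα : 0 < α) (hx₂ : 0 < infDist x₂ F)
    (h : 2 * ‖x₁ - x₂‖ < infDist x₁ F) :
    |powerKernelIntegral μ α F x₁ - powerKernelIntegral μ α F x₂| ≤
      (finrank ℝ E + α) * 2 ^ (finrank ℝ E + α + 1) * μ.toSphere.real univ / (α + 1) *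
        infDist x₁ F ^ (-1 - α) * ‖x₁ - x₂‖ := by
  set β : ℝ := finrank ℝ E + α
  have hβ : 0 < β := by positivity
  have hx₁ : 0 < infDist x₁ F := lt_of_le_of_lt (by positivity) h
  have hi₁ := integrableOn_rpow_neg_norm_sub_of_infDist_pos μ hα hx₁
  have hi₂ := integrableOn_rpow_neg_norm_sub_of_infDist_pos μ hα hx₂
  have hbound : ∀ᵐ y ∂μ.restrict F, |‖x₁ - y‖ ^ (-β) - ‖x₂ - y‖ ^ (-β)| ≤
      β * 2 ^ (β + 1) * ‖x₁ - x₂‖ * ‖x₁ - y‖ ^ (-(finrank ℝ E + (α + 1))) := by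
    refine ae_restrict_of_ae_restrict_of_subset (subset_compl_ball_infDist x₁ F)
      (ae_restrict_of_forall_mem measurableSet_ball.compl fun y hy => ?_)
    have hy' : infDist x₁ F ≤ ‖x₁ - y‖ := by simpa [dist_eq_norm, norm_sub_rev] using hy
    convert abs_rpow_neg_norm_sub_sub_le hβ (h.trans_le hy') using 3
    ring
  calc |powerKernelIntegral μ α F x₁ - powerKernelIntegral μ α F x₂|
      = |∫ y in F, (‖x₁ - y‖ ^ (-β) - ‖x₂ - y‖ ^ (-β)) ∂μ| := by
        rw [integral_sub hi₁ hi₂]; rfl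
    _ ≤ ∫ y in F, |‖x₁ - y‖ ^ (-β) - ‖x₂ - y‖ ^ (-β)| ∂μ := abs_integral_le_integral_abs
    _ ≤ ∫ y in F, β * 2 ^ (β + 1) * ‖x₁ - x₂‖ *
          ‖x₁ - y‖ ^ (-(finrank ℝ E + (α + 1))) ∂μ :=
        integral_mono_ae (hi₁.sub hi₂).abs
          ((integrableOn_rpow_neg_norm_sub_of_infDist_pos μ (by linarith) hx₁).const_mul _)
          hbound
    _ = β * 2 ^ (β + 1) * ‖x₁ - x₂‖ * powerKernelIntegral μ (α + 1) F x₁ :=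
        integral_const_mul _ _
    _ ≤ β * 2 ^ (β + 1) * ‖x₁ - x₂‖ *
          (μ.toSphere.real univ * (infDist x₁ F ^ (-(α + 1)) / (α + 1))) := by
        gcongr
        exact powerKernelIntegral_le μ (by linarith) hx₁
    _ = _ := by rw [show -(α + 1) = -1 - α by ring]; ring

theorem exists_abs_powerKernelIntegral_sub_le (hα : 0 < α) :
    ∃ C > 0, ∀ (F : Set E) (x₁ x₂ : E), 0 < infDist x₁ F → 0 < infDist x₂ F →
      |powerKernelIntegral μ α F x₁ - powerKernelIntegral μ α F x₂| ≤
        C * (infDist x₁ F ^ (-1 - α) + infDist x₂ F ^ (-1 - α)) * ‖x₁ - x₂‖ := by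
  have : NeZero μ.toSphere := ⟨μ.toSphere_ne_zero⟩
  have hS : 0 < μ.toSphere.real univ := measureReal_univ_pos
  set Cfar := 2 * μ.toSphere.real univ / α
  set Cnear := (finrank ℝ E + α) * 2 ^ (finrank ℝ E + α + 1) * μ.toSphere.real univ / (α + 1)
  refine ⟨Cfar + Cnear, by positivity, fun F x₁ x₂ hx₁ hx₂ => ?_⟩
  wlog hρ : infDist x₂ F ≤ infDist x₁ F generalizing x₁ x₂
  · have := this x₂ x₁ hx₂ hx₁ (le_of_not_ge hρ)
    rwa [abs_sub_comm, norm_sub_rev, add_comm (infDist x₂ F ^ (-1 - α))] at this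
  rcases lt_or_ge (2 * ‖x₁ - x₂‖) (infDist x₁ F) with hnear | hfar
  · calc _ ≤ Cnear * infDist x₁ F ^ (-1 - α) * ‖x₁ - x₂‖ :=
          abs_powerKernelIntegral_sub_le_of_two_mul_lt μ hα hx₂ hnear
      _ ≤ Cnear * (infDist x₁ F ^ (-1 - α) + infDist x₂ F ^ (-1 - α)) * ‖x₁ - x₂‖ := by
          gcongr
          exact le_add_of_nonneg_right (by positivity)
      _ ≤ _ := by
          gcongr
          exact le_add_of_nonneg_left (by positivity)
  · calc _ ≤ Cfar * (infDist x₁ F ^ (-1 - α) + infDist x₂ F ^ (-1 - α)) * ‖x₁ - x₂‖ :=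
          abs_powerKernelIntegral_sub_le_of_le_two_mul μ hα hx₁ hx₂ hfar (hρ.trans hfar)
      _ ≤ _ := by
          gcongr
          exact le_add_of_nonneg_right (by positivity)

theorem locallyLipschitzOn_powerKernelIntegral (hα : 0 < α) (F : Set E) :
    LocallyLipschitzOn {x | 0 < infDist x F} (powerKernelIntegral μ α F) := by
  obtain ⟨C, hC, hest⟩ := exists_abs_powerKernelIntegral_sub_le μ hα
  intro x (hx : 0 < infDist x F)
  have hball : ∀ z ∈ ball x (infDist x F / 2), infDist x F / 2 ≤ infDist z F := fun z hz => by
    have := infDist_le_infDist_add_dist (x := x) (y := z) (s := F)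
    rw [mem_ball, dist_comm] at hz
    linarith
  have hpow : ∀ z ∈ ball x (infDist x F / 2),
      infDist z F ^ (-1 - α) ≤ (infDist x F / 2) ^ (-1 - α) := fun z hz =>
    Real.rpow_le_rpow_of_nonpos (by positivity) (hball z hz) (by linarith)
  refine ⟨(C * (2 * (infDist x F / 2) ^ (-1 - α))).toNNReal, ball x (infDist x F / 2),
    mem_nhdsWithin_of_mem_nhds (ball_mem_nhds x (by positivity)),
    LipschitzOnWith.of_dist_le_mul fun z₁ hz₁ z₂ hz₂ => ?_⟩
  rw [Real.coe_toNNReal _ (by positivity), Real.dist_eq, dist_eq_norm]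
  calc _ ≤ C * (infDist z₁ F ^ (-1 - α) + infDist z₂ F ^ (-1 - α)) * ‖z₁ - z₂‖ :=
        hest F z₁ z₂ (by linarith [hball z₁ hz₁]) (by linarith [hball z₂ hz₂])
    _ ≤ _ := by
        gcongr
        linarith [hpow z₁ hz₁, hpow z₂ hz₂]

end PowerKernel

theorem IsOpen.infDist_frontier_eq_infDist_compl {E : Type*} [NormedAddCommGroup E]
    [NormedSpace ℝ E] [FiniteDimensional ℝ E] {Ω : Set E} (hΩ : IsOpen Ω) {x : E}
    (hx : x ∈ Ω) : infDist x (frontier Ω) = infDist x Ωᶜ := by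
  rcases eq_or_ne Ω univ with rfl | hΩu
  · simp
  obtain ⟨y, hy, hxy⟩ := exists_mem_frontier_infDist_compl_eq_dist hx hΩu
  have hfrontier : frontier Ω ⊆ Ωᶜ := hΩ.frontier_eq ▸ sdiff_subset_compl _ _
  exact le_antisymm (hxy ▸ infDist_le_dist_of_mem hy)
    (infDist_le_infDist_of_subset hfrontier ⟨y, hy⟩)

lemma phiReg_eq_powerKernelIntegral (N : ℕ) (s : ℝ) (Ω : Set (EuclideanSpace ℝ (Fin N))) :
    phiReg N s Ω = powerKernelIntegral volume (2 * s) Ωᶜ := by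
  ext x
  simp [phiReg, powerKernelIntegral]

/-- a Lipschitz-type estimate for `φ_Ω` with constant depending only on `N, s`,
where `ρ(x) = dist(x, ∂Ω)`; in particular `φ_Ω` is locally Lipschitz continuous on `Ω`. -/
theorem stmt1 (N : ℕ) (hN : 2 ≤ N) (s : ℝ) (hs : s ∈ Set.Ioo (0 : ℝ) 1) :
    ∃ c > (0 : ℝ), ∀ Ω : Set (EuclideanSpace ℝ (Fin N)), IsOpen Ω → Ωᶜ.Nonempty →
      (∀ x₁ ∈ Ω, ∀ x₂ ∈ Ω,
        |phiReg N s Ω x₁ - phiReg N s Ω x₂| ≤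
          c * (Metric.infDist x₁ (frontier Ω) ^ (-1 - 2 * s)
               + Metric.infDist x₂ (frontier Ω) ^ (-1 - 2 * s)) * ‖x₁ - x₂‖) ∧
      (∀ x ∈ Ω, ∃ K : NNReal, ∃ t ∈ nhdsWithin x Ω, LipschitzOnWith K (phiReg N s Ω) t) := by
  have : Nontrivial (EuclideanSpace ℝ (Fin N)) :=
    Module.nontrivial_of_finrank_pos (R := ℝ) (by rw [finrank_euclideanSpace_fin]; omega)
  have hα : 0 < 2 * s := by linarith [hs.1]
  obtain ⟨C, hC, hest⟩ := exists_abs_powerKernelIntegral_sub_le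
    (volume : Measure (EuclideanSpace ℝ (Fin N))) hα
  refine ⟨C, hC, fun Ω hΩ hne => ?_⟩
  have hpos : Ω ⊆ {x | 0 < infDist x Ωᶜ} := fun x hx =>
    (hΩ.isClosed_compl.notMem_iff_infDist_pos hne).mp (not_not_intro hx)
  rw [phiReg_eq_powerKernelIntegral]
  refine ⟨fun x₁ hx₁ x₂ hx₂ => ?_,
    (locallyLipschitzOn_powerKernelIntegral volume hα Ωᶜ).mono hpos⟩
  rw [hΩ.infDist_frontier_eq_infDist_compl hx₁, hΩ.infDist_frontier_eq_infDist_compl hx₂]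
  exact hest Ωᶜ x₁ x₂ (hpos hx₁) (hpos hx₂)
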